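/- arXiv:2603.23298 — 5 statements merged into one kernel-verified Lean document; each statement's English description precedes it below -/
import Mathlib

section
/- Let M be a finite directed multigraph (a 'molecule') with n atoms in which every atom has in-degree at most 2 and out-degree at most 2, and in which no connected component has all of its atoms of degree 4. Then M has at most 2n − 1 bonds. -/
/-- A molecule: a finite directed multigraph given by atom type `V`, bond type `E`
and maps `src tgt : E → V`, in which every atom has in-degree at most 2 and
out-degree at most 2, and no connected component (for the
reflexive-symmetric-transitive closure of adjacency) consists entirely of atoms
of degree 4.  Then the number of bonds is at most `2 * n - 1` where `n` is the
number of atoms. -/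
theorem molecule_card_bonds_le {V E : Type*} [Fintype V] [Fintype E] [DecidableEq V]
    (src tgt : E → V)
    (hout : ∀ v : V, (Finset.univ.filter fun e => src e = v).card ≤ 2)
    (hin : ∀ v : V, (Finset.univ.filter fun e => tgt e = v).card ≤ 2)
    (hcomp : ∀ v : V, ∃ u : V,
      Relation.ReflTransGen
        (fun a b => ∃ e : E, (src e = a ∧ tgt e = b) ∨ (src e = b ∧ tgt e = a)) v u ∧
      (Finset.univ.filter fun e => tgt e = u).card
        + (Finset.univ.filter fun e => src e = u).card ≠ 4) :
    Fintype.card E ≤ 2 * Fintype.card V - 1 := by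
  classical
  cases isEmpty_or_nonempty V with
  | inl h =>
    have : IsEmpty E := ⟨fun e => (h.false (src e))⟩
    simp [Fintype.card_eq_zero]
  | inr h =>
    haveI := h
    obtain ⟨v⟩ := h
    obtain ⟨u, -, hu⟩ := hcomp v
    set f : V → ℕ := fun w =>
      (Finset.univ.filter fun e => tgt e = w).card
        + (Finset.univ.filter fun e => src e = w).card with hf
    have hsum_tgt : Fintype.card E
        = ∑ w : V, (Finset.univ.filter fun e => tgt e = w).card :=
      Finset.card_eq_sum_card_fiberwise (fun e _ => Finset.mem_univ _)
    have hsum_src : Fintype.card E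
        = ∑ w : V, (Finset.univ.filter fun e => src e = w).card :=
      Finset.card_eq_sum_card_fiberwise (fun e _ => Finset.mem_univ _)
    have h2 : 2 * Fintype.card E = ∑ w : V, f w := by
      have := congrArg₂ (· + ·) hsum_tgt hsum_src
      simpa [two_mul, Finset.sum_add_distrib, hf] using this
    have hfu : f u ≤ 3 := by
      have := hin u
      have := hout u
      simp only [hf]
      omega
    have hfw : ∀ w : V, f w ≤ 4 := fun w => by
      have := hin w
      have := hout w
      simp only [hf]
      omega
    have hsplit : ∑ w : V, f w = f u + ∑ w ∈ Finset.univ.erase u, f w :=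
      (Finset.add_sum_erase _ f (Finset.mem_univ u)).symm
    have hrest : ∑ w ∈ Finset.univ.erase u, f w ≤ 4 * (Fintype.card V - 1) := by
      calc ∑ w ∈ Finset.univ.erase u, f w
          ≤ ∑ _w ∈ Finset.univ.erase u, 4 := Finset.sum_le_sum fun w _ => hfw w
        _ = (Finset.univ.erase u).card * 4 := by rw [Finset.sum_const, smul_eq_mul]
        _ = 4 * (Fintype.card V - 1) := by
            rw [Finset.card_erase_of_mem (Finset.mem_univ u), Finset.card_univ]
            ring
    have hVpos : 1 ≤ Fintype.card V := Fintype.card_pos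
    have : 2 * Fintype.card E ≤ 4 * Fintype.card V - 1 := by
      rw [h2, hsplit]
      omega
    omega
end

section
/- Let M be a finite directed multigraph (a 'molecule') with n atoms in which every atom has in-degree at most 2 and out-degree at most 2, and in which no connected component has all of its atoms of degree 4. If M has exactly 2n − 1 bonds (i.e. M is a base molecule), then M is connected. -/
/-- A base molecule (a molecule with `n` atoms and exactly `2 * n - 1` bonds) is
connected: any two atoms are related by the reflexive-transitive closure of the
(symmetric) adjacency relation. -/
theorem base_molecule_connected {V E : Type*} [Fintype V] [Fintype E] [DecidableEq V]
    (src tgt : E → V)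
    (hout : ∀ v : V, (Finset.univ.filter fun e => src e = v).card ≤ 2)
    (hin : ∀ v : V, (Finset.univ.filter fun e => tgt e = v).card ≤ 2)
    (hcomp : ∀ v : V, ∃ u : V,
      Relation.ReflTransGen
        (fun a b => ∃ e : E, (src e = a ∧ tgt e = b) ∨ (src e = b ∧ tgt e = a)) v u ∧
      (Finset.univ.filter fun e => tgt e = u).card
        + (Finset.univ.filter fun e => src e = u).card ≠ 4)
    (hbase : (Fintype.card E : ℤ) = 2 * Fintype.card V - 1) :
    ∀ u v : V,
      Relation.ReflTransGen
        (fun a b => ∃ e : E, (src e = a ∧ tgt e = b) ∨ (src e = b ∧ tgt e = a)) u v := by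
  classical
  set R : V → V → Prop :=
    fun a b => ∃ e : E, (src e = a ∧ tgt e = b) ∨ (src e = b ∧ tgt e = a) with hR
  have hRsymm : Symmetric R := fun a b ⟨e, h⟩ => ⟨e, h.symm⟩
  have hsymm : Symmetric (Relation.ReflTransGen R) :=
    by haveI : Std.Symm R := ⟨fun a b h => hRsymm h⟩; exact fun a b h => Std.Symm.symm a b h
  -- key counting lemma: a nonempty set closed under adjacency containing a vertex of
  -- degree ≠ 4 has fewer than 2 * |S| edges starting in it
  have key : ∀ S : Finset V, (∀ e : E, src e ∈ S ↔ tgt e ∈ S) →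
      ∀ w ∈ S, (Finset.univ.filter fun e => tgt e = w).card
        + (Finset.univ.filter fun e => src e = w).card ≠ 4 →
      (Finset.univ.filter fun e => src e ∈ S).card < 2 * S.card := by
    intro S hclosed w hw hdegw
    have hsrc : (Finset.univ.filter fun e => src e ∈ S).card
        = ∑ v ∈ S, (Finset.univ.filter fun e => src e = v).card := by
      rw [Finset.card_eq_sum_card_fiberwise (f := src) (s := Finset.univ.filter fun e => src e ∈ S) (t := S)
        (fun e he => (Finset.mem_filter.mp he).2)]
      refine Finset.sum_congr rfl fun b hb => ?_
      congr 1
      ext e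
      simp only [Finset.mem_filter, Finset.mem_univ, true_and]
      exact ⟨fun h => h.2, fun h => ⟨h ▸ hb, h⟩⟩
    have htgt : (Finset.univ.filter fun e => tgt e ∈ S).card
        = ∑ v ∈ S, (Finset.univ.filter fun e => tgt e = v).card := by
      rw [Finset.card_eq_sum_card_fiberwise (f := tgt) (s := Finset.univ.filter fun e => tgt e ∈ S) (t := S)
        (fun e he => (Finset.mem_filter.mp he).2)]
      refine Finset.sum_congr rfl fun b hb => ?_
      congr 1
      ext e
      simp only [Finset.mem_filter, Finset.mem_univ, true_and]
      exact ⟨fun h => h.2, fun h => ⟨h ▸ hb, h⟩⟩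
    have heq : (Finset.univ.filter fun e => src e ∈ S)
        = (Finset.univ.filter fun e => tgt e ∈ S) := by
      ext e; simp [hclosed e]
    have hsum : 2 * (Finset.univ.filter fun e => src e ∈ S).card
        = ∑ v ∈ S, ((Finset.univ.filter fun e => tgt e = v).card
            + (Finset.univ.filter fun e => src e = v).card) := by
      rw [Finset.sum_add_distrib, ← hsrc, ← htgt, ← heq]; ring
    have hbound : ∑ v ∈ S.erase w, ((Finset.univ.filter fun e => tgt e = v).card
            + (Finset.univ.filter fun e => src e = v).card) ≤ 4 * (S.erase w).card := by
      calc ∑ v ∈ S.erase w, ((Finset.univ.filter fun e => tgt e = v).card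
            + (Finset.univ.filter fun e => src e = v).card)
          ≤ ∑ _v ∈ S.erase w, 4 := Finset.sum_le_sum fun v _ => by
              have h1 := hin v; have h2 := hout v; omega
        _ = 4 * (S.erase w).card := by rw [Finset.sum_const, smul_eq_mul]; ring
    have hsplit := Finset.sum_erase_add S
      (fun v => (Finset.univ.filter fun e => tgt e = v).card
            + (Finset.univ.filter fun e => src e = v).card) hw
    have hce : (S.erase w).card = S.card - 1 := Finset.card_erase_of_mem hw
    have hS1 : 1 ≤ S.card := Finset.card_pos.mpr ⟨w, hw⟩
    have hdw : (Finset.univ.filter fun e => tgt e = w).card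
        + (Finset.univ.filter fun e => src e = w).card ≤ 3 := by
      have h1 := hin w; have h2 := hout w; omega
    omega
  intro u v
  by_contra hcon
  set S : Finset V := Finset.univ.filter fun w => Relation.ReflTransGen R u w with hS
  have hmemS : ∀ w, w ∈ S ↔ Relation.ReflTransGen R u w := by
    intro w; simp [hS]
  have hclosed : ∀ e : E, src e ∈ S ↔ tgt e ∈ S := by
    intro e
    rw [hmemS, hmemS]
    constructor
    · intro h; exact h.tail ⟨e, Or.inl ⟨rfl, rfl⟩⟩
    · intro h; exact h.tail ⟨e, Or.inr ⟨rfl, rfl⟩⟩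
  have hclosedc : ∀ e : E, src e ∈ Sᶜ ↔ tgt e ∈ Sᶜ := by
    intro e; simp only [Finset.mem_compl]; rw [hclosed e]
  obtain ⟨w1, hw1r, hw1d⟩ := hcomp u
  have hw1 : w1 ∈ S := (hmemS w1).mpr hw1r
  obtain ⟨w2, hw2r, hw2d⟩ := hcomp v
  have hw2 : w2 ∈ Sᶜ := by
    rw [Finset.mem_compl, hmemS]
    intro h
    exact hcon (h.trans (hsymm hw2r))
  have h1 := key S hclosed w1 hw1 hw1d
  have h2 := key Sᶜ hclosedc w2 hw2 hw2d
  have hpart : (Finset.univ.filter fun e => src e ∈ S).card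
      + (Finset.univ.filter fun e => src e ∈ Sᶜ).card = Fintype.card E := by
    rw [← Finset.card_univ]
    have hcompl : (Finset.univ.filter fun e => src e ∈ Sᶜ)
        = Finset.univ.filter fun e => ¬ src e ∈ S := by
      ext e; simp
    rw [hcompl]
    exact Finset.card_filter_add_card_filter_not _
  have hcards : S.card + Sᶜ.card = Fintype.card V := by
    rw [Finset.card_add_card_compl]
  omega
end

section
/- Let M be a finite directed multigraph (a 'molecule') with n atoms in which every atom has in-degree at most 2 and out-degree at most 2, and in which no connected component has all of its atoms of degree 4. If M has exactly 2n − 1 bonds (i.e. M is a base molecule), then either M has exactly two atoms of degree 3 and all other atoms of degree 4, or M has exactly one atom of degree 2 and all other atoms of degree 4. -/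
/-- A base molecule (a molecule with `n` atoms and exactly `2 * n - 1` bonds)
has either exactly two atoms of degree 3 and all other atoms of degree 4, or
exactly one atom of degree 2 and all other atoms of degree 4.  Here the degree
of an atom is the sum of its in-degree and out-degree. -/
theorem base_molecule_degrees {V E : Type*} [Fintype V] [Fintype E] [DecidableEq V]
    (src tgt : E → V)
    (hout : ∀ v : V, (Finset.univ.filter fun e => src e = v).card ≤ 2)
    (hin : ∀ v : V, (Finset.univ.filter fun e => tgt e = v).card ≤ 2)
    (hcomp : ∀ v : V, ∃ u : V,
      Relation.ReflTransGen
        (fun a b => ∃ e : E, (src e = a ∧ tgt e = b) ∨ (src e = b ∧ tgt e = a)) v u ∧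
      (Finset.univ.filter fun e => tgt e = u).card
        + (Finset.univ.filter fun e => src e = u).card ≠ 4)
    (hbase : (Fintype.card E : ℤ) = 2 * Fintype.card V - 1) :
    (∃ a b : V, a ≠ b ∧
      (Finset.univ.filter fun e => tgt e = a).card
        + (Finset.univ.filter fun e => src e = a).card = 3 ∧
      (Finset.univ.filter fun e => tgt e = b).card
        + (Finset.univ.filter fun e => src e = b).card = 3 ∧
      ∀ c : V, c ≠ a → c ≠ b →
        (Finset.univ.filter fun e => tgt e = c).card
          + (Finset.univ.filter fun e => src e = c).card = 4) ∨
    (∃ a : V,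
      (Finset.univ.filter fun e => tgt e = a).card
        + (Finset.univ.filter fun e => src e = a).card = 2 ∧
      ∀ c : V, c ≠ a →
        (Finset.univ.filter fun e => tgt e = c).card
          + (Finset.univ.filter fun e => src e = c).card = 4) := by
  classical
  set deg : V → ℕ := fun v =>
    (Finset.univ.filter fun e => tgt e = v).card
      + (Finset.univ.filter fun e => src e = v).card with hdeg
  have hdeg4 : ∀ v, deg v ≤ 4 := fun v => by
    have := hout v; have := hin v; simp only [hdeg]; omega
  -- handshake
  have hsrc : ∑ v : V, (Finset.univ.filter fun e => src e = v).card = Fintype.card E :=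
    (Finset.card_eq_sum_card_fiberwise (fun e _ => Finset.mem_univ (src e))).symm
  have htgt : ∑ v : V, (Finset.univ.filter fun e => tgt e = v).card = Fintype.card E :=
    (Finset.card_eq_sum_card_fiberwise (fun e _ => Finset.mem_univ (tgt e))).symm
  have hsum : ∑ v : V, deg v = 2 * Fintype.card E := by
    simp only [hdeg, Finset.sum_add_distrib, hsrc, htgt]; ring
  -- card E in ℕ
  have hE : 2 * Fintype.card E + 2 = 4 * Fintype.card V := by
    have : (0 : ℤ) ≤ (Fintype.card E : ℤ) := Int.natCast_nonneg _
    omega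
  -- deficit function
  set f : V → ℕ := fun v => 4 - deg v with hf
  have hfsum : ∑ v : V, f v = 2 := by
    have h1 : ∑ v : V, f v + ∑ v : V, deg v = ∑ v : V, 4 := by
      rw [← Finset.sum_add_distrib]
      refine Finset.sum_congr rfl fun v _ => ?_
      have := hdeg4 v; simp only [hf]; omega
    rw [hsum] at h1
    simp only [Finset.sum_const, Finset.card_univ, smul_eq_mul] at h1
    omega
  have hne : ∃ a : V, f a ≠ 0 := by
    by_contra h
    push_neg at h
    rw [Finset.sum_congr rfl (fun v _ => h v)] at hfsum
    simp at hfsum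
  obtain ⟨a, ha⟩ := hne
  have hsplit : f a + ∑ v ∈ Finset.univ.erase a, f v = 2 := by
    rw [Finset.add_sum_erase _ _ (Finset.mem_univ a)]; exact hfsum
  have hfa2 : f a ≤ 2 := by omega
  have hdegf : ∀ v, f v = 0 → deg v = 4 := fun v h => by
    have := hdeg4 v; simp only [hf] at h; omega
  rcases Nat.lt_or_ge (f a) 2 with h1 | h2
  · -- f a = 1, find another
    have hfa1 : f a = 1 := by omega
    have hrest : ∑ v ∈ Finset.univ.erase a, f v = 1 := by omega
    have hne2 : ∃ b ∈ Finset.univ.erase a, f b ≠ 0 := by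
      by_contra h
      push_neg at h
      rw [Finset.sum_congr rfl h] at hrest
      simp at hrest
    obtain ⟨b, hbmem, hb⟩ := hne2
    have hsplit2 : f b + ∑ v ∈ (Finset.univ.erase a).erase b, f v = 1 := by
      rw [Finset.add_sum_erase _ _ hbmem]; exact hrest
    have hfb1 : f b = 1 := by omega
    have hrest0 : ∀ v ∈ (Finset.univ.erase a).erase b, f v = 0 := by
      intro v hv
      have hle := Finset.single_le_sum (f := f) (fun i _ => Nat.zero_le _) hv
      omega
    left
    refine ⟨a, b, (Finset.ne_of_mem_erase hbmem).symm, ?_, ?_, ?_⟩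
    · have := hdeg4 a; simp only [hf] at hfa1
      change deg a = 3; omega
    · have := hdeg4 b; simp only [hf] at hfb1
      change deg b = 3; omega
    · intro c hca hcb
      exact hdegf c (hrest0 c (by simp [hca, hcb]))
  · -- f a = 2
    have hfa : f a = 2 := le_antisymm hfa2 h2
    have hrest0 : ∀ v ∈ Finset.univ.erase a, f v = 0 := by
      intro v hv
      have hle := Finset.single_le_sum (f := f) (fun i _ => Nat.zero_le _) hv
      omega
    right
    refine ⟨a, ?_, ?_⟩
    · have := hdeg4 a; simp only [hf] at hfa
      change deg a = 2; omega
    · intro c hc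
      exact hdegf c (hrest0 c (by simp [hc]))
end

section
/- Let V be a finite type, G a connected simple graph on V, and w a real-valued weight function on unordered pairs of vertices. Let A be a set of edges of G that is contained in the edge set of some minimum spanning tree of G, let S ⊆ V be a set of vertices such that no edge of A has exactly one endpoint in S, and let e be an edge of G with exactly one endpoint in S whose weight is minimal among all edges of G with exactly one endpoint in S. Then A ∪ {e} is contained in the edge set of some minimum spanning tree of G (the 'safe edge' / cut property underlying both Prim's and Kruskal's algorithms). -/
open SimpleGraph

/-- Any walk whose endpoints lie on opposite sides of a cut contains an edge
crossing the cut. -/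
lemma cross_walk' {V : Type*} {G : SimpleGraph V} (S : Set V) :
    ∀ {a b : V} (p : G.Walk a b), Xor' (a ∈ S) (b ∈ S) →
      ∃ x y, G.Adj x y ∧ Xor' (x ∈ S) (y ∈ S) ∧ s(x, y) ∈ p.edges := by
  intro a b p
  induction p with
  | nil => intro h; simp [Xor'] at h
  | @cons a c b h q ih =>
      intro hab
      by_cases hx : Xor' (a ∈ S) (c ∈ S)
      · exact ⟨a, c, h, hx, by simp⟩
      · have hcb : Xor' (c ∈ S) (b ∈ S) := by
          unfold Xor' Xor at *; tauto
        obtain ⟨x, y, h1, h2, h3⟩ := ih hcb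
        exact ⟨x, y, h1, h2, by simp [h3]⟩

/-- If the endpoints of a deleted edge are still reachable, reachability
in the original graph implies reachability after deletion. -/
lemma reach_del' {V : Type*} {G : SimpleGraph V} {x y : V}
    (h : (G.deleteEdges {s(x, y)}).Reachable x y) :
    ∀ {a b : V}, G.Reachable a b → (G.deleteEdges {s(x, y)}).Reachable a b := by
  intro a b hab
  obtain ⟨p⟩ := hab
  induction p with
  | nil => exact SimpleGraph.Reachable.refl _
  | @cons a c b hadj q ih =>
      refine SimpleGraph.Reachable.trans ?_ ih
      by_cases he : s(a, c) = s(x, y)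
      · rw [Sym2.eq_iff] at he
        rcases he with ⟨rfl, rfl⟩ | ⟨rfl, rfl⟩
        · exact h
        · exact h.symm
      · exact SimpleGraph.Adj.reachable (by simp [SimpleGraph.deleteEdges_adj, hadj, he])

/-- The total weight of a simple graph on a finite vertex type: the sum of the
weights of its edges. -/
noncomputable def totalWeight {V : Type*} [Fintype V] (w : Sym2 V → ℝ)
    (H : SimpleGraph V) : ℝ :=
  ∑ e ∈ (Set.toFinite H.edgeSet).toFinset, w e

/-- `T` is a minimum spanning tree of `G` for the weight function `w`. -/
def IsMST {V : Type*} [Fintype V] (G : SimpleGraph V) (w : Sym2 V → ℝ)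
    (T : SimpleGraph V) : Prop :=
  T ≤ G ∧ T.IsTree ∧
    ∀ T' : SimpleGraph V, T' ≤ G → T'.IsTree → totalWeight w T ≤ totalWeight w T'

/-- The cut property ("safe edge" lemma) underlying Prim's and Kruskal's
algorithms: if `A` is a set of edges of a connected graph `G` contained in some
minimum spanning tree, `S` is a set of vertices such that no edge of `A`
crosses the cut determined by `S`, and `s(u,v)` is an edge of `G` crossing this
cut of minimal weight among all such edges, then `A ∪ {s(u,v)}` is still
contained in some minimum spanning tree of `G`. -/
theorem safe_edge_cut_property {V : Type*} [Fintype V]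
    (G : SimpleGraph V) (hG : G.Connected) (w : Sym2 V → ℝ)
    (A : Set (Sym2 V)) (hA : ∃ T : SimpleGraph V, IsMST G w T ∧ A ⊆ T.edgeSet)
    (S : Set V)
    (hAS : ∀ x y : V, s(x, y) ∈ A → ¬ Xor' (x ∈ S) (y ∈ S))
    (u v : V) (huv : G.Adj u v) (hcross : Xor' (u ∈ S) (v ∈ S))
    (hmin : ∀ x y : V, G.Adj x y → Xor' (x ∈ S) (y ∈ S) → w s(u, v) ≤ w s(x, y)) :
    ∃ T : SimpleGraph V, IsMST G w T ∧ A ∪ {s(u, v)} ⊆ T.edgeSet := by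
  classical
  obtain ⟨T, ⟨hTG, hTtree, hTmin⟩, hAT⟩ := hA
  by_cases hf : s(u, v) ∈ T.edgeSet
  · exact ⟨T, ⟨hTG, hTtree, hTmin⟩,
      Set.union_subset hAT (by simpa using hf)⟩
  -- get a path from u to v in T and a crossing edge on it
  obtain ⟨p0⟩ := hTtree.isConnected u v
  set p : T.Path u v := p0.toPath with hp
  obtain ⟨x, y, hxy, hXor, hmem⟩ := cross_walk' S (p : T.Walk u v) hcross
  have hxyG : G.Adj x y := hTG hxy
  have hef : s(x, y) ≠ s(u, v) := by
    intro h; exact hf (h ▸ (T.mem_edgeSet.mpr hxy))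
  have hwle : w s(u, v) ≤ w s(x, y) := hmin x y hxyG hXor
  have hune : u ≠ v := huv.ne
  set T2 : SimpleGraph V := T ⊔ SimpleGraph.edge u v with hT2
  set T' : SimpleGraph V := T2.deleteEdges {s(x, y)} with hT'def
  have hedgeG : SimpleGraph.edge u v ≤ G := by
    intro a b hab
    rw [SimpleGraph.edge_adj] at hab
    rcases hab.1 with ⟨rfl, rfl⟩ | ⟨rfl, rfl⟩
    · exact huv
    · exact huv.symm
  have hT2G : T2 ≤ G := sup_le hTG hedgeG
  have hT'G : T' ≤ G := (SimpleGraph.deleteEdges_le _).trans hT2G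
  have hT'edges : T'.edgeSet = (T.edgeSet ∪ {s(u, v)}) \ {s(x, y)} := by
    rw [hT'def, SimpleGraph.edgeSet_deleteEdges, hT2, SimpleGraph.edgeSet_sup,
      SimpleGraph.edge_edgeSet_of_ne hune]
  -- the cycle in T2 through both s(u,v) and s(x,y)
  have hpT2 : ∀ e ∈ (p : T.Walk u v).edges, e ∈ T2.edgeSet := fun e he =>
    SimpleGraph.edgeSet_mono le_sup_left ((p : T.Walk u v).edges_subset_edgeSet he)
  have hvuT2 : T2.Adj v u := by
    apply le_sup_right (b := SimpleGraph.edge u v)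
    rw [SimpleGraph.edge_adj]; exact ⟨Or.inr ⟨rfl, rfl⟩, hune.symm⟩
  have hcyc : (SimpleGraph.Walk.cons hvuT2
      ((p : T.Walk u v).transfer T2 hpT2)).IsCycle := by
    rw [SimpleGraph.Walk.cons_isCycle_iff]
    refine ⟨p.2.transfer hpT2, ?_⟩
    rw [SimpleGraph.Walk.edges_transfer]
    intro hmem'
    exact hf (by
      have := (p : T.Walk u v).edges_subset_edgeSet hmem'
      rwa [Sym2.eq_swap] at this)
  have hreachxy : (T2.deleteEdges {s(x, y)}).Reachable x y := by
    have hin : s(x, y) ∈ (SimpleGraph.Walk.cons hvuT2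
        ((p : T.Walk u v).transfer T2 hpT2)).edges := by
      rw [SimpleGraph.Walk.edges_cons, SimpleGraph.Walk.edges_transfer]
      exact List.mem_cons_of_mem _ hmem
    have := (SimpleGraph.adj_and_reachable_delete_edges_iff_exists_cycle
      (G := T2) (v := x) (w := y)).2 ⟨v, _, hcyc, hin⟩
    exact this.2
  -- connectivity of T'
  have hT'conn : T'.Connected := by
    rw [SimpleGraph.connected_iff]
    refine ⟨fun a b => reach_del' hreachxy ?_, hG.nonempty⟩
    exact (hTtree.isConnected.mono le_sup_left) a b
  -- acyclicity of T'
  have hT'acyc : T'.IsAcyclic := by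
    intro a c hc
    by_cases hfc : s(u, v) ∈ c.edges
    · -- a cycle through s(u,v) gives reachability of u,v in T' minus s(u,v)
      have hre := (SimpleGraph.adj_and_reachable_delete_edges_iff_exists_cycle
        (G := T') (v := u) (w := v)).2 ⟨a, c, hc, hfc⟩
      have hle : T'.deleteEdges {s(u, v)} ≤ T.deleteEdges {s(x, y)} := by
        rw [← SimpleGraph.edgeSet_subset_edgeSet, SimpleGraph.edgeSet_deleteEdges,
          SimpleGraph.edgeSet_deleteEdges, SimpleGraph.edgeSet_deleteEdges,
          hT2, SimpleGraph.edgeSet_sup, SimpleGraph.edge_edgeSet_of_ne hune]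
        rintro a' ⟨⟨h1 | h1, h2⟩, h3⟩
        · exact ⟨h1, h2⟩
        · exact absurd h1 h3
      have hre' : (T.deleteEdges {s(x, y)}).Reachable u v :=
        hre.2.mono hle
      -- but u,v are not reachable in T minus s(x,y) since the unique path uses it
      obtain ⟨q0⟩ := hre'
      set q : (T.deleteEdges {s(x, y)}).Path u v := q0.toPath with hq
      have hqT : ∀ e ∈ (q : (T.deleteEdges {s(x, y)}).Walk u v).edges,
          e ∈ T.edgeSet := fun e he => by
        have := (q : (T.deleteEdges {s(x, y)}).Walk u v).edges_subset_edgeSet he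
        rw [SimpleGraph.edgeSet_deleteEdges] at this
        exact this.1
      have hq' : ((q : (T.deleteEdges {s(x, y)}).Walk u v).transfer T hqT).IsPath :=
        q.2.transfer hqT
      have hpq : p = ⟨_, hq'⟩ := hTtree.IsAcyclic.path_unique p ⟨_, hq'⟩
      have hcoe : (p : T.Walk u v)
          = (q : (T.deleteEdges {s(x, y)}).Walk u v).transfer T hqT :=
        congrArg Subtype.val hpq
      have hmem2 := hmem
      rw [hcoe, SimpleGraph.Walk.edges_transfer] at hmem2
      have := (q : (T.deleteEdges {s(x, y)}).Walk u v).edges_subset_edgeSet hmem2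
      rw [SimpleGraph.edgeSet_deleteEdges] at this
      exact this.2 rfl
    · -- a cycle avoiding s(u,v) lives in T
      have hcT : ∀ e ∈ c.edges, e ∈ T.edgeSet := fun e he => by
        have h1 := c.edges_subset_edgeSet he
        rw [hT'edges] at h1
        rcases h1.1 with h2 | h2
        · exact h2
        · exact absurd (Set.mem_singleton_iff.1 h2 ▸ he) hfc
      exact hTtree.IsAcyclic _ (hc.transfer hcT)
  have hT'tree : T'.IsTree := ⟨hT'conn, hT'acyc⟩
  -- weight computation
  have hF : (Set.toFinite T'.edgeSet).toFinset
      = insert s(u, v) (((Set.toFinite T.edgeSet).toFinset).erase s(x, y)) := by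
    ext e
    simp only [Set.Finite.mem_toFinset, hT'edges, Set.mem_diff, Set.mem_union,
      Set.mem_singleton_iff, Finset.mem_insert, Finset.mem_erase,
      Set.Finite.mem_toFinset]
    constructor
    · rintro ⟨h1 | h1, h2⟩
      · exact Or.inr ⟨h2, h1⟩
      · exact Or.inl h1
    · rintro (rfl | ⟨h1, h2⟩)
      · exact ⟨Or.inr rfl, fun h => hef h.symm⟩
      · exact ⟨Or.inl h2, h1⟩
  have hwT' : totalWeight w T' = w s(u, v) + (totalWeight w T - w s(x, y)) := by
    unfold totalWeight
    rw [hF, Finset.sum_insert, Finset.sum_erase_eq_sub]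
    · rwa [Set.Finite.mem_toFinset]
    · simp only [Finset.mem_erase, Set.Finite.mem_toFinset]
      exact fun h => hf h.2
  have hwle' : totalWeight w T' ≤ totalWeight w T := by
    rw [hwT']; linarith
  refine ⟨T', ⟨hT'G, hT'tree, fun T'' h1 h2 => hwle'.trans (hTmin T'' h1 h2)⟩, ?_⟩
  refine Set.union_subset ?_ ?_
  · intro a ha
    rw [hT'edges]
    refine ⟨Or.inl (hAT ha), fun h => ?_⟩
    rw [Set.mem_singleton_iff] at h
    exact hAS x y (h ▸ ha) hXor
  · intro a ha
    rw [Set.mem_singleton_iff] at ha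
    subst ha
    rw [hT'edges]
    exact ⟨Or.inr rfl, fun h => hef (Set.mem_singleton_iff.1 h).symm⟩
end

section
/- Let V be a finite type, G a connected simple graph on V, and w a real-valued weight function on unordered pairs of vertices, and fix a root vertex r. Define U₀ = {r} and A₀ = ∅, and for each step i ≥ 1 with U_{i−1} ≠ V, choose an edge f_i of G with exactly one endpoint in U_{i−1} of minimal weight among such edges, and set A_i = A_{i−1} ∪ {f_i} and U_i = U_{i−1} ∪ {endpoints of f_i}. Then such a choice is possible at every step until U_i = V, this happens after exactly |V| − 1 steps, and the spanning subgraph of G with edge set A_{|V|−1} is a spanning tree of G of minimum total weight (Prim's algorithm produces a minimum spanning tree rooted at r). -/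
open SimpleGraph

section

variable {V : Type*}

def IsMinCrossingEdge (G : SimpleGraph V) (w : Sym2 V → ℝ) (U : Set V) (u v : V) : Prop :=
  G.Adj u v ∧ Xor (u ∈ U) (v ∈ U) ∧
    ∀ x y : V, G.Adj x y → Xor (x ∈ U) (y ∈ U) → w s(u, v) ≤ w s(x, y)

lemma IsMinCrossingEdge.symm {G : SimpleGraph V} {w : Sym2 V → ℝ} {U : Set V} {u v : V}
    (h : IsMinCrossingEdge G w U u v) : IsMinCrossingEdge G w U v u :=
  ⟨h.1.symm, xor_comm _ _ ▸ h.2.1, fun x y hxy hx => Sym2.eq_swap (a := v) ▸ h.2.2 x y hxy hx⟩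

lemma SimpleGraph.Connected.exists_adj_mem_notMem {G : SimpleGraph V} (hG : G.Connected)
    {U : Set V} (hne : U.Nonempty) (hU : U ≠ Set.univ) : ∃ x y, G.Adj x y ∧ x ∈ U ∧ y ∉ U := by
  obtain ⟨a, ha⟩ := hne
  obtain ⟨b, hb⟩ := (Set.ne_univ_iff_exists_notMem U).mp hU
  obtain ⟨d, -, hd⟩ := (hG a b).some.exists_boundary_dart U ha hb
  exact ⟨d.fst, d.snd, d.adj, hd⟩

lemma SimpleGraph.Connected.exists_isMinCrossingEdge [Finite V] {G : SimpleGraph V}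
    (hG : G.Connected) (w : Sym2 V → ℝ) {U : Set V} (hne : U.Nonempty) (hU : U ≠ Set.univ) :
    ∃ u v, IsMinCrossingEdge G w U u v := by
  obtain ⟨x, y, hxy, hx, hy⟩ := hG.exists_adj_mem_notMem hne hU
  obtain ⟨⟨u, v⟩, ⟨huv, hu, hv⟩, hmin⟩ := Set.exists_min_image
    {p : V × V | G.Adj p.1 p.2 ∧ p.1 ∈ U ∧ p.2 ∉ U} (fun p => w s(p.1, p.2))
    (Set.toFinite _) ⟨(x, y), hxy, hx, hy⟩
  refine ⟨u, v, huv, Or.inl ⟨hu, hv⟩, fun a b hab hcross => ?_⟩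
  rcases hcross with ⟨ha, hb⟩ | ⟨hb, ha⟩
  · exact hmin (a, b) ⟨hab, ha, hb⟩
  · exact Sym2.eq_swap (a := b) ▸ hmin (b, a) ⟨hab.symm, hb, ha⟩

lemma totalWeight_eq_finsum [Fintype V] (w : Sym2 V → ℝ) (H : SimpleGraph V) :
    totalWeight w H = ∑ᶠ e ∈ H.edgeSet, w e :=
  (finsum_mem_eq_finite_toFinset_sum w (Set.toFinite _)).symm

lemma SimpleGraph.Connected.exists_isMST [Fintype V] {G : SimpleGraph V} (hG : G.Connected)
    (w : Sym2 V → ℝ) : ∃ T, IsMST G w T := by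
  obtain ⟨T₀, hT₀⟩ := hG.exists_isTree_le
  obtain ⟨T, hT, hmin⟩ := Set.exists_min_image {T | T ≤ G ∧ T.IsTree} (totalWeight w)
    (Set.toFinite _) ⟨T₀, hT₀⟩
  exact ⟨T, hT.1, hT.2, fun T' hle hT' => hmin T' ⟨hle, hT'⟩⟩

namespace SimpleGraph

variable {T : SimpleGraph V} {u v : V} {e : Sym2 V}

lemma IsTree.ncard_edgeSet_add_one [Finite V] (hT : T.IsTree) :
    T.edgeSet.ncard + 1 = Nat.card V := by
  rw [← Nat.card_coe_set_eq]
  exact (isTree_iff_connected_and_card.mp hT).2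

lemma edgeSet_sup_edge_deleteEdges (huv : u ≠ v) (hadj : ¬T.Adj u v) (he : e ∈ T.edgeSet) :
    ((T ⊔ edge u v).deleteEdges {e}).edgeSet = insert s(u, v) (T.edgeSet \ {e}) := by
  have hne : s(u, v) ≠ e := fun h => hadj (by rwa [← mem_edgeSet, h])
  rw [edgeSet_deleteEdges, edgeSet_sup, edgeSet_edge_of_ne huv, Set.union_singleton,
    Set.insert_sdiff_of_notMem _ (Set.notMem_singleton_iff.mpr hne)]

lemma isTree_sup_edge_deleteEdges [Finite V] (hT : T.IsTree) (huv : u ≠ v) (hadj : ¬T.Adj u v)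
    {p : T.Walk u v} (hp : p.IsPath) {x y : V} (hxy : s(x, y) ∈ p.edges) :
    ((T ⊔ edge u v).deleteEdges {s(x, y)}).IsTree := by
  have hvu : (T ⊔ edge u v).Adj v u :=
    Or.inr ((edge_adj _ _ _ _).mpr ⟨Or.inr ⟨rfl, rfl⟩, huv.symm⟩)
  have hcycle : (Walk.cons hvu (p.mapLe le_sup_left)).IsCycle := by
    rw [Walk.cons_isCycle_iff, Walk.edges_mapLe_eq_edges]
    exact ⟨hp.mapLe _, fun h => hadj (p.adj_of_mem_edges h).symm⟩
  have hbridge : ¬(T ⊔ edge u v).IsBridge s(x, y) := fun h =>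
    h.notMem_edges_of_isCycle hcycle (by simp [hxy])
  have hxyT : s(x, y) ∈ T.edgeSet := p.edges_subset_edgeSet hxy
  rw [isTree_iff_connected_and_card, Nat.card_coe_set_eq,
    edgeSet_sup_edge_deleteEdges huv hadj hxyT, Set.ncard_insert_of_notMem (fun h => hadj h.1),
    Set.ncard_sdiff_singleton_add_one hxyT]
  exact ⟨(hT.connected.mono le_sup_left).connected_delete_edge_of_not_isBridge hbridge,
    hT.ncard_edgeSet_add_one⟩

lemma totalWeight_sup_edge_deleteEdges [Fintype V] (w : Sym2 V → ℝ) (huv : u ≠ v)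
    (hadj : ¬T.Adj u v) (he : e ∈ T.edgeSet) :
    totalWeight w ((T ⊔ edge u v).deleteEdges {e}) + w e = totalWeight w T + w s(u, v) := by
  rw [totalWeight_eq_finsum, totalWeight_eq_finsum, edgeSet_sup_edge_deleteEdges huv hadj he,
    finsum_mem_insert _ (fun h => hadj h.1) (Set.toFinite _), ← Set.insert_sdiff_self_of_mem he,
    finsum_mem_insert _ (fun h => h.2 rfl) (Set.toFinite _), Set.insert_sdiff_self_of_mem he]
  ring

end SimpleGraph

theorem IsMST.exists_isMST_insert_of_isMinCrossingEdge [Fintype V] {G T : SimpleGraph V}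
    {w : Sym2 V → ℝ} (hT : IsMST G w T) {U : Set V} {A : Set (Sym2 V)} (hAT : A ⊆ T.edgeSet)
    (hAU : A ⊆ U.sym2) {u v : V} (huv : IsMinCrossingEdge G w U u v) :
    ∃ T', IsMST G w T' ∧ insert s(u, v) A ⊆ T'.edgeSet := by
  wlog hcross : u ∈ U ∧ v ∉ U generalizing u v
  · simpa only [Sym2.eq_swap] using this huv.symm (Or.resolve_left huv.2.1 hcross)
  obtain ⟨hTG, hTtree, hTmin⟩ := hT
  by_cases hadj : T.Adj u v
  · exact ⟨T, ⟨hTG, hTtree, hTmin⟩, Set.insert_subset hadj hAT⟩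
  obtain ⟨p, hp⟩ := (hTtree.connected u v).exists_isPath
  obtain ⟨d, hd, hdU⟩ := p.exists_boundary_dart U hcross.1 hcross.2
  have hdp : s(d.fst, d.snd) ∈ p.edges := List.mem_map_of_mem hd
  have hdT : s(d.fst, d.snd) ∈ T.edgeSet := d.adj
  have hweight :
      totalWeight w ((T ⊔ edge u v).deleteEdges {s(d.fst, d.snd)}) ≤ totalWeight w T := by
    have hexchange := totalWeight_sup_edge_deleteEdges w huv.1.ne hadj hdT
    have hmin := huv.2.2 d.fst d.snd (hTG d.adj) (Or.inl hdU)
    linarith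
  refine ⟨_, ⟨(deleteEdges_le _).trans (sup_le hTG ((edge_le_iff G).mpr (Or.inr huv.1))),
    isTree_sup_edge_deleteEdges hTtree huv.1.ne hadj hp hdp,
    fun T' hT'G hT' => hweight.trans (hTmin T' hT'G hT')⟩, ?_⟩
  rw [edgeSet_sup_edge_deleteEdges huv.1.ne hadj hdT]
  exact Set.insert_subset_insert (Set.subset_sdiff_singleton hAT fun h => hdU.2 (hAU h).2)

structure IsPrimState [Fintype V] (G : SimpleGraph V) (w : Sym2 V → ℝ) (k : ℕ) (U : Set V)
    (A : Set (Sym2 V)) : Prop where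
  ncard_vertices : U.ncard = k + 1
  ncard_edges : A.ncard = k
  edges_subset_sym2 : A ⊆ U.sym2
  exists_isMST : ∃ T, IsMST G w T ∧ A ⊆ T.edgeSet

lemma isPrimState_zero [Fintype V] {G : SimpleGraph V} (hG : G.Connected) (w : Sym2 V → ℝ)
    (r : V) : IsPrimState G w 0 {r} ∅ :=
  ⟨Set.ncard_singleton r, Set.ncard_empty _, Set.empty_subset _,
    (hG.exists_isMST w).imp fun _ hT => ⟨hT, Set.empty_subset _⟩⟩

namespace IsPrimState

variable [Fintype V] {G : SimpleGraph V} {w : Sym2 V → ℝ} {k : ℕ} {U : Set V} {A : Set (Sym2 V)}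

lemma step (h : IsPrimState G w k U A) {u v : V} (huv : IsMinCrossingEdge G w U u v) :
    IsPrimState G w (k + 1) (U ∪ {u, v}) (A ∪ {s(u, v)}) := by
  wlog hcross : u ∈ U ∧ v ∉ U generalizing u v
  · simpa only [Set.pair_comm, Sym2.eq_swap] using this huv.symm (Or.resolve_left huv.2.1 hcross)
  have hU : U ∪ {u, v} = insert v U := by
    rw [Set.union_insert, Set.union_singleton, Set.insert_comm, Set.insert_eq_of_mem hcross.1]
  have hA : s(u, v) ∉ A := fun huvA => hcross.2 (h.edges_subset_sym2 huvA).2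
  rw [hU, Set.union_singleton]
  obtain ⟨T, hT, hAT⟩ := h.exists_isMST
  refine ⟨by rw [Set.ncard_insert_of_notMem hcross.2, h.ncard_vertices],
    by rw [Set.ncard_insert_of_notMem hA, h.ncard_edges], ?_,
    hT.exists_isMST_insert_of_isMinCrossingEdge hAT h.edges_subset_sym2 huv⟩
  exact Set.insert_subset ⟨Set.mem_insert_of_mem _ hcross.1, Set.mem_insert _ _⟩
    fun e he => Set.mem_sym2_iff_subset.mpr
      ((Set.mem_sym2_iff_subset.mp (h.edges_subset_sym2 he)).trans (Set.subset_insert _ _))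

lemma eq_univ_iff (h : IsPrimState G w k U A) : U = Set.univ ↔ k + 1 = Fintype.card V := by
  rw [Set.eq_univ_iff_ncard, h.ncard_vertices, Nat.card_eq_fintype_card]

lemma isMST_fromEdgeSet (h : IsPrimState G w (Fintype.card V - 1) U A) :
    IsMST G w (fromEdgeSet A) := by
  obtain ⟨T, hT, hAT⟩ := h.exists_isMST
  have hcard := hT.2.1.ncard_edgeSet_add_one
  rw [Nat.card_eq_fintype_card] at hcard
  have hAeq : A = T.edgeSet :=
    Set.eq_of_subset_of_ncard_le hAT (by rw [h.ncard_edges]; omega)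
  rwa [hAeq, fromEdgeSet_edgeSet]

end IsPrimState

end

/-- Prim's algorithm produces a minimum spanning tree rooted at `r`.  First, at
any stage where the current vertex set `U` is nonempty and not all of `V`,
there exists an edge of `G` with exactly one endpoint in `U` of minimal weight
among such edges, so the greedy choice is always possible.  Second, for any run
of the algorithm — sequences `U i` of vertex sets and `A i` of edge sets with
`U 0 = {r}`, `A 0 = ∅`, where at each step `i < |V| - 1` a minimal-weight edge
`s(u,v)` of `G` with exactly one endpoint in `U i` is chosen and
`U (i+1) = U i ∪ {u, v}`, `A (i+1) = A i ∪ {s(u,v)}` — the vertex set is not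
yet full before step `|V| - 1`, it is full after exactly `|V| - 1` steps, and
the spanning subgraph with edge set `A (|V| - 1)` is a minimum spanning tree of
`G`. -/
theorem prim_minimum_spanning_tree {V : Type*} [Fintype V]
    (G : SimpleGraph V) (hG : G.Connected) (w : Sym2 V → ℝ) (r : V) :
    (∀ U : Set V, U.Nonempty → U ≠ Set.univ →
      ∃ u v : V, G.Adj u v ∧ Xor' (u ∈ U) (v ∈ U) ∧
        ∀ x y : V, G.Adj x y → Xor' (x ∈ U) (y ∈ U) → w s(u, v) ≤ w s(x, y)) ∧
    (∀ (U : ℕ → Set V) (A : ℕ → Set (Sym2 V)),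
      U 0 = {r} → A 0 = ∅ →
      (∀ i < Fintype.card V - 1, ∃ u v : V, G.Adj u v ∧ Xor' (u ∈ U i) (v ∈ U i) ∧
        (∀ x y : V, G.Adj x y → Xor' (x ∈ U i) (y ∈ U i) → w s(u, v) ≤ w s(x, y)) ∧
        U (i + 1) = U i ∪ {u, v} ∧ A (i + 1) = A i ∪ {s(u, v)}) →
      (∀ i < Fintype.card V - 1, U i ≠ Set.univ) ∧
      U (Fintype.card V - 1) = Set.univ ∧
      IsMST G w (SimpleGraph.fromEdgeSet (A (Fintype.card V - 1)))) := by
  refine ⟨fun U hne hU => hG.exists_isMinCrossingEdge w hne hU, fun U A hU₀ hA₀ hstep => ?_⟩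
  have hstate : ∀ i ≤ Fintype.card V - 1, IsPrimState G w i (U i) (A i) := by
    intro i
    induction i with
    | zero => exact fun _ => hU₀ ▸ hA₀ ▸ isPrimState_zero hG w r
    | succ i ih =>
      intro hi
      obtain ⟨u, v, hadj, hcross, hmin, hU, hA⟩ := hstep i hi
      exact hU ▸ hA ▸ (ih (Nat.le_of_succ_le hi)).step ⟨hadj, hcross, hmin⟩
  have hcard : 0 < Fintype.card V := Fintype.card_pos_iff.mpr hG.nonempty
  exact ⟨fun i hi => mt (hstate i hi.le).eq_univ_iff.mp (by omega),
    (hstate _ le_rfl).eq_univ_iff.mpr (by omega), (hstate _ le_rfl).isMST_fromEdgeSet⟩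
end
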